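/- If A is a well-pointed space and p : X → Y is a based map that is a (not necessarily based) homotopy equivalence, then the induced map p∗ : Top∗(A, X) → Top∗(A, Y) on based mapping spaces is a homotopy equivalence. -/

import Mathlib

universe u v

/-- The homotopy extension property for a map `i : A → X`. -/
def HasHEP {A : Type u} {X : Type v} [TopologicalSpace A] [TopologicalSpace X]
    (i : A → X) : Prop :=
  ∀ (Y : Type (max u v)) (_ : TopologicalSpace Y) (f : X → Y), Continuous f →
    ∀ H : unitInterval × A → Y, Continuous H → (∀ a, H (0, a) = f (i a)) →
      ∃ G : unitInterval × X → Y, Continuous G ∧ (∀ x, G (0, x) = f x) ∧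
        ∀ t a, G (t, i a) = H (t, a)

/-- A closed cofibration: a closed embedding with the homotopy extension property. -/
def IsClosedCofibration {A : Type u} {X : Type v} [TopologicalSpace A] [TopologicalSpace X]
    (i : A → X) : Prop :=
  Topology.IsClosedEmbedding i ∧ HasHEP i

/-- The space of based maps `(A, a₀) → (X, x₀)`, topologized as a subspace of the
mapping space `C(A, X)` with the (k-ified) compact-open topology. -/
def BasedMaps (A X : Type) [TopologicalSpace A] [TopologicalSpace X] (a₀ : A) (x₀ : X) :=
  {f : C(A, X) // f a₀ = x₀}

instance (A X : Type) [TopologicalSpace A] [TopologicalSpace X] (a₀ : A) (x₀ : X) :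
    TopologicalSpace (BasedMaps A X a₀ x₀) :=
  inferInstanceAs (TopologicalSpace {f : C(A, X) // f a₀ = x₀})

/-!
An unbased homotopy inverse `q` of `p` does not act on based maps: `q ∘ f` is based at `q y₀`,
not at `x₀`. Well-pointedness of `A` (in Strøm's form, a retraction
of `I × A` onto `I × {a₀} ∪ {0} × A`) lets one transport a based map along a path `γ` from its base
point, continuously in the map, and transport along `γ.symm` undoes it up to homotopy. Transporting
`q ∘ f` along the track of `x₀` under `q ∘ p ≃ id` gives a left homotopy inverse `Q` of `p∗`; the
same construction for `q` gives a left homotopy inverse of `q∗`, hence of `Q`, and a map with a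
left homotopy inverse which itself has one is a homotopy equivalence.
-/

open Set unitInterval Topology

namespace ContinuousMap

variable {X Y Z W : Type*} [TopologicalSpace X] [TopologicalSpace Y] [TopologicalSpace Z]
  [TopologicalSpace W]

theorem continuous_of_continuous_restrict {s t : Set X} (hs : IsClosed s) (ht : IsClosed t)
    (hst : s ∪ t = univ) {F : W → C(X, Y)} (hFs : Continuous fun w => (F w).restrict s)
    (hFt : Continuous fun w => (F w).restrict t) : Continuous F := by
  rw [continuous_compactOpen]
  intro K hK U hU
  have hmaps : {w | MapsTo (F w) K U} =
      {w | MapsTo ((F w).restrict s) (Subtype.val ⁻¹' K) U} ∩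
        {w | MapsTo ((F w).restrict t) (Subtype.val ⁻¹' K) U} := by
    ext w
    refine ⟨fun h => ⟨fun x hx => h hx, fun x hx => h hx⟩, fun ⟨h₁, h₂⟩ x hx => ?_⟩
    rcases (hst.symm ▸ mem_univ x : x ∈ s ∪ t) with hxs | hxt
    · exact h₁ (x := ⟨x, hxs⟩) hx
    · exact h₂ (x := ⟨x, hxt⟩) hx
  rw [hmaps]
  exact ((isOpen_setOfPred_mapsTo (hs.isClosedEmbedding_subtypeVal.isCompact_preimage hK)
      hU).preimage hFs).inter
    ((isOpen_setOfPred_mapsTo (ht.isClosedEmbedding_subtypeVal.isCompact_preimage hK)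
      hU).preimage hFt)

theorem continuous_curry_apply [LocallyCompactSpace X] :
    Continuous fun p : C(X × Y, Z) × X => p.1.curry p.2 := by
  rw [continuous_compactOpen]
  intro L hL U hU
  rw [isOpen_iff_mem_nhds]
  rintro ⟨F₀, x₀⟩ h
  obtain ⟨J, V, hJ, -, hxJ, hLV, hJV⟩ := generalized_tube_lemma isCompact_singleton hL
    (hU.preimage F₀.continuous) (by rintro ⟨x, y⟩ ⟨rfl, hy⟩; exact h hy)
  obtain ⟨Jc, hJc, hxJc, hJcJ⟩ := exists_compact_subset hJ (hxJ rfl)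
  rw [nhds_prod_eq]
  refine Filter.mem_of_superset (Filter.prod_mem_prod
      ((isOpen_setOfPred_mapsTo (hJc.prod hL) hU).mem_nhds ?_)
      (isOpen_interior.mem_nhds hxJc)) ?_
  · rintro ⟨x, y⟩ ⟨hx, hy⟩
    exact hJV ⟨hJcJ hx, hLV hy⟩
  · rintro ⟨F, x⟩ ⟨hF, hx⟩ y hy
    exact hF ⟨interior_subset hx, hy⟩

theorem Homotopic.comp_homotopic_id_of_leftInverse {P : C(X, Y)} {Q : C(Y, X)} {L : C(X, Y)}
    (hQP : (Q.comp P).Homotopic (.id X)) (hLQ : (L.comp Q).Homotopic (.id Y)) :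
    (P.comp Q).Homotopic (.id Y) :=
  have h₁ : (P.comp Q).Homotopic (L.comp ((Q.comp P).comp Q)) :=
    hLQ.symm.comp (.refl (P.comp Q))
  have h₂ : (L.comp ((Q.comp P).comp Q)).Homotopic (L.comp Q) :=
    (Homotopic.refl L).comp (hQP.comp (.refl Q))
  h₁.trans (h₂.trans hLQ)

theorem Homotopic.comp_comp_homotopic_id {f₁ : C(X, Y)} {g₁ : C(Y, X)} {f₂ : C(Y, Z)}
    {g₂ : C(Z, Y)} (h₁ : (g₁.comp f₁).Homotopic (.id X)) (h₂ : (g₂.comp f₂).Homotopic (.id Y)) :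
    ((g₁.comp g₂).comp (f₂.comp f₁)).Homotopic (.id X) :=
  ((Homotopic.refl g₁).comp (h₂.comp (.refl f₁))).trans h₁

end ContinuousMap

namespace BasedMaps

variable {A X Y Z : Type} [TopologicalSpace A] [TopologicalSpace X] [TopologicalSpace Y]
  [TopologicalSpace Z] {a₀ : A} {x₀ : X}

@[ext]
theorem ext {f g : BasedMaps A X a₀ x₀} (h : ∀ a, f.1 a = g.1 a) : f = g :=
  Subtype.ext (ContinuousMap.ext h)

theorem continuous_val : Continuous fun f : BasedMaps A X a₀ x₀ => f.1 :=
  continuous_subtype_val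

def lift (F : C(Z, C(A, X))) (hF : ∀ z, F z a₀ = x₀) : C(Z, BasedMaps A X a₀ x₀) :=
  ⟨fun z => ⟨F z, hF z⟩, F.continuous.subtype_mk _⟩

variable (a₀) in
def postcomp (p : C(X, Y)) (x₀ : X) : C(BasedMaps A X a₀ x₀, BasedMaps A Y a₀ (p x₀)) :=
  lift ⟨fun f => p.comp f.1, (ContinuousMap.continuous_postcomp p).comp continuous_val⟩
    fun f => congrArg p f.2

end BasedMaps

def partialCylinder {A : Type} (a₀ : A) : Set (I × A) := {z | z.2 = a₀ ∨ z.1 = 0}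

namespace partialCylinder

variable {A : Type} {a₀ : A}

theorem setOf_base_union_setOf_zero :
    {z : partialCylinder a₀ | z.1.2 = a₀} ∪ {z | z.1.1 = 0} = univ :=
  eq_univ_of_forall fun z => z.2

variable [TopologicalSpace A]

theorem isClosed_setOf_zero : IsClosed {z : partialCylinder a₀ | z.1.1 = 0} :=
  isClosed_singleton.preimage (continuous_fst.comp continuous_subtype_val)

theorem isClosed_setOf_base (ha : IsClosed ({a₀} : Set A)) :
    IsClosed {z : partialCylinder a₀ | z.1.2 = a₀} :=
  ha.preimage (continuous_snd.comp continuous_subtype_val)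

end partialCylinder

variable {A B : Type} [TopologicalSpace A] [TopologicalSpace B] {a₀ : A}

/-- Strøm's form of a closed cofibration `{a₀} → A`: a retraction of `I × A` onto
`I × {a₀} ∪ {0} × A`. -/
structure CylinderRetraction (a₀ : A) where
  toContinuousMap : C(I × A, partialCylinder a₀)
  apply_zero : ∀ a, (toContinuousMap (0, a) : I × A) = (0, a)
  apply_base : ∀ t, (toContinuousMap (t, a₀) : I × A) = (t, a₀)
  isClosed_base : IsClosed ({a₀} : Set A)

theorem IsClosedCofibration.nonempty_cylinderRetraction
    (h : IsClosedCofibration fun _ : PUnit => a₀) : Nonempty (CylinderRetraction a₀) := by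
  obtain ⟨G, hG, hG₀, hGa⟩ := h.2 (ULift (partialCylinder a₀)) inferInstance
    (fun a => ⟨(0, a), Or.inr rfl⟩)
    (continuous_uliftUp.comp ((continuous_const.prodMk continuous_id).subtype_mk _))
    (fun w => ⟨(w.1, a₀), Or.inl rfl⟩)
    (continuous_uliftUp.comp ((continuous_fst.prodMk continuous_const).subtype_mk _))
    (fun _ => rfl)
  refine ⟨⟨⟨fun z => (G z).down, continuous_uliftDown.comp hG⟩, fun a => ?_, fun t => ?_, ?_⟩⟩
  · exact congrArg (fun w => (ULift.down w).1) (hG₀ a)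
  · exact congrArg (fun w => (ULift.down w).1) (hGa t PUnit.unit)
  · simpa using h.1.isClosed_range

abbrev PathMapPair (a₀ : A) (B : Type) [TopologicalSpace B] : Type :=
  {x : C(I, B) × C(A, B) // x.2 a₀ = x.1 0}

namespace PathMapPair

open partialCylinder

open scoped Classical in
noncomputable def glue (ha : IsClosed ({a₀} : Set A)) (x : PathMapPair a₀ B) :
    C(partialCylinder a₀, B) where
  toFun z := if z.1.2 = a₀ then x.1.1 z.1.1 else x.1.2 z.1.2
  continuous_toFun := by
    rw [← continuousOn_univ, ← setOf_base_union_setOf_zero]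
    refine ContinuousOn.union_of_isClosed ?_ ?_ (isClosed_setOf_base ha) isClosed_setOf_zero
    · exact (x.1.1.continuous.comp (continuous_fst.comp continuous_subtype_val)).continuousOn.congr
        fun z hz => if_pos hz
    · refine (x.1.2.continuous.comp (continuous_snd.comp continuous_subtype_val)).continuousOn.congr
        fun z (hz : z.1.1 = 0) => ?_
      split_ifs with h
      · simp only [Function.comp_apply, hz, h, x.2]
      · rfl

theorem glue_of_base (ha : IsClosed ({a₀} : Set A)) (x : PathMapPair a₀ B)
    {z : partialCylinder a₀} (hz : z.1.2 = a₀) :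
    glue ha x z = x.1.1 z.1.1 :=
  if_pos hz

theorem glue_of_zero (ha : IsClosed ({a₀} : Set A)) (x : PathMapPair a₀ B)
    {z : partialCylinder a₀} (hz : z.1.1 = 0) :
    glue ha x z = x.1.2 z.1.2 := by
  by_cases h : z.1.2 = a₀
  · rw [glue_of_base ha x h, hz, h, x.2]
  · exact if_neg h

theorem continuous_glue (ha : IsClosed ({a₀} : Set A)) : Continuous (glue (B := B) ha) := by
  refine ContinuousMap.continuous_of_continuous_restrict (isClosed_setOf_base ha)
    isClosed_setOf_zero setOf_base_union_setOf_zero ?_ ?_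
  · refine ((ContinuousMap.continuous_precomp ⟨fun z => z.1.1.1, by fun_prop⟩).comp
      (continuous_fst.comp continuous_subtype_val)).congr fun x => ?_
    ext z
    exact (glue_of_base ha x z.2).symm
  · refine ((ContinuousMap.continuous_precomp ⟨fun z => z.1.1.2, by fun_prop⟩).comp
      (continuous_snd.comp continuous_subtype_val)).congr fun x => ?_
    ext z
    exact (glue_of_zero ha x z.2).symm

end PathMapPair

namespace CylinderRetraction

variable {Z : Type} [TopologicalSpace Z] (R : CylinderRetraction a₀)

noncomputable def extend (x : PathMapPair a₀ B) : C(I × A, B) :=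
  (PathMapPair.glue R.isClosed_base x).comp R.toContinuousMap

theorem extend_zero (x : PathMapPair a₀ B) (a : A) : R.extend x (0, a) = x.1.2 a := by
  rw [extend, ContinuousMap.comp_apply, PathMapPair.glue_of_zero _ _ (by rw [R.apply_zero]),
    R.apply_zero]

theorem extend_base (x : PathMapPair a₀ B) (t : I) : R.extend x (t, a₀) = x.1.1 t := by
  rw [extend, ContinuousMap.comp_apply, PathMapPair.glue_of_base _ _ (by rw [R.apply_base]),
    R.apply_base]

theorem continuous_extend_curry :
    Continuous fun w : PathMapPair a₀ B × I => (R.extend w.1).curry w.2 :=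
  ContinuousMap.continuous_curry_apply.comp
    (((ContinuousMap.continuous_precomp _).comp
      (PathMapPair.continuous_glue R.isClosed_base)).prodMap continuous_id)

noncomputable def transportHomotopy {b₀ b₁ : B} (γ : Path b₀ b₁) :
    C(I × BasedMaps A B a₀ b₀, C(A, B)) :=
  ⟨fun w => (R.extend ⟨((γ : C(I, B)), w.2.1), w.2.2.trans γ.source.symm⟩).curry w.1,
    R.continuous_extend_curry.comp
      ((((continuous_const.prodMk BasedMaps.continuous_val).subtype_mk
        fun g : BasedMaps A B a₀ b₀ => g.2.trans γ.source.symm).comp continuous_snd).prodMk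
          continuous_fst)⟩

theorem transportHomotopy_apply_base {b₀ b₁ : B} (γ : Path b₀ b₁) (τ : I)
    (g : BasedMaps A B a₀ b₀) : R.transportHomotopy γ (τ, g) a₀ = γ τ :=
  R.extend_base _ τ

theorem transportHomotopy_zero {b₀ b₁ : B} (γ : Path b₀ b₁) (g : BasedMaps A B a₀ b₀) :
    R.transportHomotopy γ (0, g) = g.1 :=
  ContinuousMap.ext (R.extend_zero _)

noncomputable def transport {b₀ b₁ : B} (γ : Path b₀ b₁) :
    C(BasedMaps A B a₀ b₀, BasedMaps A B a₀ b₁) :=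
  BasedMaps.lift ((R.transportHomotopy γ).curry 1)
    fun _ => (R.transportHomotopy_apply_base γ 1 _).trans γ.target

theorem homotopic_transport_refl (b : B) :
    (R.transport (Path.refl b)).Homotopic (ContinuousMap.id (BasedMaps A B a₀ b)) := by
  let H : C(I × BasedMaps A B a₀ b, BasedMaps A B a₀ b) := BasedMaps.lift
    ((R.transportHomotopy (Path.refl b)).comp ((symmHomeomorph : C(I, I)).prodMap (.id _)))
    fun _ => R.transportHomotopy_apply_base _ _ _
  refine ⟨⟨H, fun g => ?_, fun g => ?_⟩⟩
  · ext a
    show R.transportHomotopy _ (σ 0, g) a = R.transportHomotopy _ (1, g) a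
    rw [symm_zero]
  · ext a
    show R.transportHomotopy _ (σ 1, g) a = g.1 a
    rw [symm_one, R.transportHomotopy_zero]

theorem homotopic_transport_comp {b₀ b₁ : B} (ℓ : Path b₀ b₁) (D : C(I × Z, C(A, B)))
    (hD : ∀ τ z, D (τ, z) a₀ = ℓ τ) {U : C(Z, BasedMaps A B a₀ b₀)}
    {V : C(Z, BasedMaps A B a₀ b₁)} (hU : ∀ z, (U z).1 = D (0, z)) (hV : ∀ z, (V z).1 = D (1, z)) :
    ((R.transport ℓ).comp U).Homotopic V := by
  -- transport along the tail `ℓ|[τ, 1]` of `ℓ`, which shrinks to the constant path at `τ = 1`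
  let tail : C(I × I, B) := (ℓ : C(I, B)).comp ⟨fun s => max s.1 s.2, continuous_max⟩
  have tail_zero (τ : I) : tail (τ, 0) = ℓ τ := by simp [tail]
  let pair (w : I × Z) : PathMapPair a₀ B :=
    ⟨(tail.curry w.1, D w), (hD w.1 w.2).trans (tail_zero w.1).symm⟩
  let H : C(I × Z, BasedMaps A B a₀ b₁) := BasedMaps.lift
    ⟨fun w => (R.extend (pair w)).curry 1,
      R.continuous_extend_curry.comp
        ((((tail.curry.continuous.comp continuous_fst).prodMk D.continuous).subtype_mk _).prodMk
          continuous_const)⟩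
    fun w => (R.extend_base _ 1).trans (by simp [pair, tail, le_one'])
  have hH : ((R.transport ℓ).comp U).Homotopic ((R.transport (Path.refl b₁)).comp V) := by
    refine ⟨⟨H, fun z => ?_, fun z => ?_⟩⟩
    · ext a
      show R.extend (pair (0, z)) (1, a) = R.extend ⟨((ℓ : C(I, B)), (U z).1), _⟩ (1, a)
      congr 2
      ext t <;> simp [pair, tail, hU]
    · ext a
      show R.extend (pair (1, z)) (1, a) = R.extend ⟨((Path.refl b₁ : C(I, B)), (V z).1), _⟩ (1, a)
      congr 2
      ext t <;> simp [pair, tail, hV, le_one']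
  exact hH.trans ((R.homotopic_transport_refl b₁).comp (.refl V))

theorem homotopic_transport_symm_comp_transport {b₀ b₁ : B} (γ : Path b₀ b₁) :
    ((R.transport γ.symm).comp (R.transport γ)).Homotopic (ContinuousMap.id _) := by
  let D := (R.transportHomotopy γ).comp ((symmHomeomorph : C(I, I)).prodMap (.id _))
  refine R.homotopic_transport_comp γ.symm D (fun _ _ => R.transportHomotopy_apply_base _ _ _)
    (fun g => ?_) (fun g => ?_)
  · ext a
    show R.transportHomotopy γ (1, g) a = R.transportHomotopy γ (σ 0, g) a
    rw [symm_zero]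
  · ext a
    show g.1 a = R.transportHomotopy γ (σ 1, g) a
    rw [symm_one, R.transportHomotopy_zero]

theorem homotopic_transport_comp_postcomp_comp_postcomp {X Y : Type} [TopologicalSpace X]
    [TopologicalSpace Y] {p : C(X, Y)} {q : C(Y, X)} (H : (q.comp p).Homotopy (.id X)) (x₀ : X) :
    (((R.transport (H.evalAt x₀)).comp (BasedMaps.postcomp a₀ q (p x₀))).comp
      (BasedMaps.postcomp a₀ p x₀)).Homotopic (ContinuousMap.id _) := by
  let D : C(I × BasedMaps A X a₀ x₀, C(A, X)) :=
    ⟨fun w => H.toContinuousMap.comp ((ContinuousMap.const A w.1).prodMk w.2.1),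
      (ContinuousMap.continuous_postcomp _).comp (ContinuousMap.continuous_prodMk_const.comp
        (continuous_fst.prodMk (BasedMaps.continuous_val.comp continuous_snd)))⟩
  rw [ContinuousMap.comp_assoc]
  refine R.homotopic_transport_comp (H.evalAt x₀) D
    (fun τ f => congrArg (fun x => H (τ, x)) f.2) (fun f => ?_) (fun f => ?_)
  · ext a
    exact (H.apply_zero (f.1 a)).symm
  · ext a
    exact (H.apply_one (f.1 a)).symm

end CylinderRetraction

/-- If `A` is well-pointed and `p : X → Y` is a based map which is a (not necessarily
based) homotopy equivalence, then `p∗ : Top∗(A,X) → Top∗(A,Y)` is a homotopy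
equivalence. -/
theorem basedMaps_postcomp_homotopyEquiv
    (A X Y : Type) [TopologicalSpace A] [TopologicalSpace X] [TopologicalSpace Y]
    (a₀ : A) (x₀ : X) (y₀ : Y)
    (hA : IsClosedCofibration (fun _ : PUnit => a₀))
    (p : C(X, Y)) (hp₀ : p x₀ = y₀)
    (hp : ∃ e : ContinuousMap.HomotopyEquiv X Y, ⇑e.toFun = p) :
    ∃ e : ContinuousMap.HomotopyEquiv (BasedMaps A X a₀ x₀) (BasedMaps A Y a₀ y₀),
      ∀ f : BasedMaps A X a₀ x₀, (e.toFun f).1 = p.comp f.1 := by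
  subst hp₀
  obtain ⟨e, he⟩ := hp
  obtain rfl : e.toFun = p := ContinuousMap.ext (congrFun he)
  obtain ⟨H⟩ := e.left_inv
  obtain ⟨K⟩ := e.right_inv
  obtain ⟨R⟩ := IsClosedCofibration.nonempty_cylinderRetraction hA
  have hQP := R.homotopic_transport_comp_postcomp_comp_postcomp H x₀
  have hLQ := ContinuousMap.Homotopic.comp_comp_homotopic_id
    (R.homotopic_transport_comp_postcomp_comp_postcomp K (e.toFun x₀))
    (R.homotopic_transport_symm_comp_transport (H.evalAt x₀))
  exact ⟨⟨_, _, hQP, hQP.comp_homotopic_id_of_leftInverse hLQ⟩, fun _ => rfl⟩
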